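/- Every unary strong normal form φ = ⋀_{j∈J} ⟨a_j⟩φ_j ∧ ⋀_{b∈A^l} [b](⋁_{k∈K_b} ψ^k_b) is represented by the process term θ(φ) defined recursively by θ(⊤) = ω and, for φ ≠ ⊤, θ(φ) = Σ_{j∈J} a_j.θ(φ_j) + Σ_{b∈A^l} Σ_{k∈K_b} b.θ(ψ^k_b); in particular, φ is a characteristic formula for θ(φ). -/
import Mathlib



/-- Process terms: `p ::= 0 | ω | a.p | p + p`. -/
inductive Proc (Act : Type) : Type where
  | nil : Proc Act
  | omega : Proc Act
  | act : Act → Proc Act → Proc Act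
  | plus : Proc Act → Proc Act → Proc Act
deriving DecidableEq

/-- Operational semantics of process terms.  The parameter `isL : Act → Bool`
describes the partition `A = A^l ⊎ A^r`: `isL a = true` means `a ∈ A^l`
(contravariant), `isL a = false` means `a ∈ A^r` (covariant). -/
inductive Step {Act : Type} (isL : Act → Bool) : Proc Act → Act → Proc Act → Prop where
  | omega {b : Act} : isL b = true → Step isL .omega b .omega
  | act {a : Act} {p : Proc Act} : Step isL (.act a p) a p
  | plusL {p q p' : Proc Act} {a : Act} : Step isL p a p' → Step isL (.plus p q) a p'
  | plusR {p q q' : Proc Act} {a : Act} : Step isL q a q' → Step isL (.plus p q) a q'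

/-- A covariant-contravariant simulation over an LTS with state space `S`,
actions `Act` partitioned by `isL` (`true` = contravariant `A^l`,
`false` = covariant `A^r`) and transition relation `tr`. -/
def IsCCSim {S Act : Type} (isL : Act → Bool) (tr : S → Act → S → Prop)
    (R : S → S → Prop) : Prop :=
  ∀ p q, R p q →
    ((∀ a, isL a = false → ∀ p', tr p a p' → ∃ q', tr q a q' ∧ R p' q') ∧
     (∀ b, isL b = true → ∀ q', tr q b q' → ∃ p', tr p b p' ∧ R p' q'))

/-- The covariant-contravariant simulation preorder `p ≲cc q` over an LTS. -/
def CCLE {S Act : Type} (isL : Act → Bool) (tr : S → Act → S → Prop) (p q : S) : Prop :=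
  ∃ R, IsCCSim isL tr R ∧ R p q

/-- `p ≲cc q` for process terms. -/
def ccle {Act : Type} (isL : Act → Bool) (p q : Proc Act) : Prop :=
  CCLE isL (Step isL) p q

/-- The covariant-contravariant modal logic `L`:
`φ ::= ⊥ | ⊤ | φ∧φ | φ∨φ | [b]φ | ⟨a⟩φ` with `a ∈ A^r` (`isL a = false`)
and `b ∈ A^l` (`isL b = true`). -/
inductive Formula (Act : Type) (isL : Act → Bool) : Type where
  | bot : Formula Act isL
  | top : Formula Act isL
  | and : Formula Act isL → Formula Act isL → Formula Act isL
  | or : Formula Act isL → Formula Act isL → Formula Act isL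
  | box : {x : Act // isL x = true} → Formula Act isL → Formula Act isL
  | dia : {x : Act // isL x = false} → Formula Act isL → Formula Act isL

/-- The satisfaction relation `p ⊨ φ`. -/
def Sat {Act : Type} (isL : Act → Bool) : Proc Act → Formula Act isL → Prop
  | _, .bot => False
  | _, .top => True
  | p, .and φ ψ => Sat isL p φ ∧ Sat isL p ψ
  | p, .or φ ψ => Sat isL p φ ∨ Sat isL p ψ
  | p, .box b φ => ∀ p', Step isL p b.1 p' → Sat isL p' φ
  | p, .dia a φ => ∃ p', Step isL p a.1 p' ∧ Sat isL p' φ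

/-- `φ ≤ ψ`: every process term satisfying `φ` satisfies `ψ`. -/
def FormLe {Act : Type} (isL : Act → Bool) (φ ψ : Formula Act isL) : Prop :=
  ∀ p, Sat isL p φ → Sat isL p ψ

/-- `φ ≡ ψ`: `φ` and `ψ` are satisfied by exactly the same process terms. -/
def FormEquiv {Act : Type} (isL : Act → Bool) (φ ψ : Formula Act isL) : Prop :=
  ∀ p, Sat isL p φ ↔ Sat isL p ψ

/-- `φ` is a characteristic formula for `p`: `p ⊨ φ` and every `q` satisfying
`φ` lies above `p` in the cc-simulation preorder. -/
def CharFor {Act : Type} (isL : Act → Bool) (φ : Formula Act isL) (p : Proc Act) : Prop :=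
  Sat isL p φ ∧ ∀ q, Sat isL q φ → ccle isL p q

/-- The formula `φ` is represented by the (single) process term `p`. -/
def Represents {Act : Type} (isL : Act → Bool) (p : Proc Act) (φ : Formula Act isL) : Prop :=
  ∀ q, Sat isL q φ ↔ ccle isL p q

/-- Finite conjunction of a list of formulae (the empty conjunction is `⊤`). -/
def listAnd {Act : Type} (isL : Act → Bool) : List (Formula Act isL) → Formula Act isL
  | [] => .top
  | φ :: l => .and φ (listAnd isL l)

/-- Finite disjunction of a list of formulae (the empty disjunction is `⊥`). -/
def listOr {Act : Type} (isL : Act → Bool) : List (Formula Act isL) → Formula Act isL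
  | [] => .bot
  | φ :: l => .or φ (listOr isL l)

/-- Size of a process term (its length in symbols). -/
def psize {Act : Type} : Proc Act → Nat
  | .nil => 1
  | .omega => 1
  | .act _ p => psize p + 1
  | .plus p q => psize p + psize q + 1

/-- The list of `a`-successors of a process term. -/
def succs {Act : Type} [DecidableEq Act] (isL : Act → Bool) : Proc Act → Act → List (Proc Act)
  | .nil, _ => []
  | .omega, b => if isL b then [.omega] else []
  | .act a p, c => if a = c then [p] else []
  | .plus p q, c => succs isL p c ++ succs isL q c

theorem psize_pos {Act : Type} (p : Proc Act) : 0 < psize p := by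
  cases p <;> simp [psize]

theorem step_iff_mem_succs {Act : Type} [DecidableEq Act] (isL : Act → Bool)
    (p : Proc Act) (a : Act) (p' : Proc Act) :
    Step isL p a p' ↔ p' ∈ succs isL p a := by
  constructor
  · intro h
    induction h with
    | omega hb => simp [succs, hb]
    | act => simp [succs]
    | plusL _ ih => simp [succs]; exact Or.inl ih
    | plusR _ ih => simp [succs]; exact Or.inr ih
  · intro h
    induction p generalizing p' with
    | nil => simp [succs] at h
    | omega =>
        by_cases hb : isL a = true <;> simp [succs, hb] at h
        subst h; exact Step.omega hb
    | act b q =>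
        by_cases hb : b = a <;> simp [succs, hb] at h
        subst h; subst hb; exact Step.act
    | plus q r ihq ihr =>
        simp [succs] at h
        rcases h with h | h
        · exact Step.plusL (ihq _ h)
        · exact Step.plusR (ihr _ h)

theorem mem_succs_psize {Act : Type} [DecidableEq Act] {isL : Act → Bool}
    {p p' : Proc Act} {a : Act} (h : p' ∈ succs isL p a) :
    p = Proc.omega ∨ psize p' < psize p := by
  induction p generalizing p' with
  | nil => simp [succs] at h
  | omega => exact Or.inl rfl
  | act b q =>
      right
      by_cases hb : b = a <;> simp [succs, hb] at h
      subst h; simp [psize]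
  | plus q r ihq ihr =>
      right
      simp [succs] at h
      rcases h with h | h
      · rcases ihq h with rfl | hlt
        · have hq : p' = Proc.omega := by
            by_cases hb : isL a = true <;> simp [succs, hb] at h
            exact h
          subst hq
          have := psize_pos r
          simp only [psize]; omega
        · have := psize_pos r
          simp only [psize]; omega
      · rcases ihr h with rfl | hlt
        · have hq : p' = Proc.omega := by
            by_cases hb : isL a = true <;> simp [succs, hb] at h
            exact h
          subst hq
          have := psize_pos q
          simp only [psize]; omega
        · have := psize_pos q
          simp only [psize]; omega

/-- The characteristic formula `χ(p)`, defined recursively by `χ(ω) = ⊤` and,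
for `p ≠ ω`,
`χ(p) = ⋀_{p →a p', a ∈ A^r} ⟨a⟩χ(p') ∧ ⋀_{b ∈ A^l} [b] (⋁_{p →b p'} χ(p'))`. -/
noncomputable def chi {Act : Type} [Fintype Act] [DecidableEq Act] (isL : Act → Bool)
    (p : Proc Act) : Formula Act isL :=
  if h : p = Proc.omega then Formula.top
  else
    Formula.and
      (listAnd isL ((Finset.univ : Finset {x : Act // isL x = false}).toList.map (fun a =>
        listAnd isL ((succs isL p a.1).attach.map (fun p' =>
          Formula.dia a (chi isL p'.1))))))
      (listAnd isL ((Finset.univ : Finset {x : Act // isL x = true}).toList.map (fun b =>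
        Formula.box b (listOr isL ((succs isL p b.1).attach.map (fun p' =>
          chi isL p'.1))))))
termination_by psize p
decreasing_by
  · rcases mem_succs_psize p'.2 with h' | h'
    · exact absurd h' h
    · exact h'
  · rcases mem_succs_psize p'.2 with h' | h'
    · exact absurd h' h
    · exact h'

/-- Sum of a list of process terms (the empty sum is `0`). -/
def plusList {Act : Type} : List (Proc Act) → Proc Act
  | [] => Proc.nil
  | p :: l => Proc.plus p (plusList l)

/-- Syntax trees for formulae in unary strong normal form.  `top` is `⊤`;
`node dias boxes` stands for
`⋀_{(a,φ) ∈ dias} ⟨a⟩φ  ∧  ⋀_{b ∈ A^l} [b] (⋁_{ψ ∈ K_b} ψ)`,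
where `K_b` is the finite collection of all unary strong normal forms
associated to `b` in the association list `boxes`. -/
inductive USNF (Act : Type) (isL : Act → Bool) : Type where
  | top : USNF Act isL
  | node : List ({x : Act // isL x = false} × USNF Act isL) →
      List ({x : Act // isL x = true} × List (USNF Act isL)) → USNF Act isL

/-- The entries associated to `b` in the association list `boxes`
(the family `K_b`). -/
def collect {Act : Type} [DecidableEq Act] {isL : Act → Bool}
    (boxes : List ({x : Act // isL x = true} × List (USNF Act isL)))
    (b : {x : Act // isL x = true}) : List (USNF Act isL) :=
  (boxes.filter (fun e => e.1 = b)).flatMap (fun e => e.2)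

theorem mem_collect_sizeOf {Act : Type} [DecidableEq Act] {isL : Act → Bool}
    {boxes : List ({x : Act // isL x = true} × List (USNF Act isL))}
    {b : {x : Act // isL x = true}} {u : USNF Act isL} (h : u ∈ collect boxes b) :
    sizeOf u < sizeOf boxes := by
  unfold collect at h
  rw [List.mem_flatMap] at h
  obtain ⟨e, he, hu⟩ := h
  rw [List.mem_filter] at he
  have h1 : sizeOf u < sizeOf e.2 := List.sizeOf_lt_of_mem hu
  have h2 : sizeOf e ≤ sizeOf boxes := le_of_lt (List.sizeOf_lt_of_mem he.1)
  have h3 : sizeOf e.2 < sizeOf e := by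
    obtain ⟨e1, e2⟩ := e; simp only [Prod.mk.sizeOf_spec]; omega
  omega

/-- The formula denoted by a unary strong normal form:
`⊤` for `top`, and
`⋀_{j ∈ J} ⟨a_j⟩ φ_j  ∧  ⋀_{b ∈ A^l} [b] ⋁_{k ∈ K_b} ψ^k_b`
for `node`. -/
noncomputable def USNF.toFormula {Act : Type} [Fintype Act] [DecidableEq Act]
    {isL : Act → Bool} : USNF Act isL → Formula Act isL
  | .top => Formula.top
  | .node dias boxes =>
      Formula.and
        (listAnd isL (dias.attach.map (fun d =>
          Formula.dia d.1.1 (USNF.toFormula d.1.2))))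
        (listAnd isL ((Finset.univ : Finset {x : Act // isL x = true}).toList.map (fun b =>
          Formula.box b (listOr isL ((collect boxes b).attach.map (fun u =>
            USNF.toFormula u.1))))))
decreasing_by
  · have h1 : sizeOf d.1 < sizeOf dias := List.sizeOf_lt_of_mem d.2
    have h2 : sizeOf d.1.2 < sizeOf d.1 := by
      obtain ⟨⟨d1, d2⟩, hd⟩ := d; simp only [Prod.mk.sizeOf_spec]; omega
    simp only [USNF.node.sizeOf_spec]
    omega
  · have h1 : sizeOf u.1 < sizeOf boxes := mem_collect_sizeOf u.2
    simp only [USNF.node.sizeOf_spec]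
    omega

/-- The process term `θ(φ)` associated to a unary strong normal form:
`θ(⊤) = ω` and `θ(φ) = Σ_{j∈J} a_j.θ(φ_j) + Σ_{b∈A^l} Σ_{k∈K_b} b.θ(ψ^k_b)`
(the empty sum is `0`). -/
noncomputable def USNF.theta {Act : Type} [Fintype Act] [DecidableEq Act]
    {isL : Act → Bool} : USNF Act isL → Proc Act
  | .top => Proc.omega
  | .node dias boxes =>
      Proc.plus
        (plusList (dias.attach.map (fun d => Proc.act d.1.1.1 (USNF.theta d.1.2))))
        (plusList ((Finset.univ : Finset {x : Act // isL x = true}).toList.map (fun b =>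
          plusList ((collect boxes b).attach.map (fun u =>
            Proc.act b.1 (USNF.theta u.1))))))
decreasing_by
  · have h1 : sizeOf d.1 < sizeOf dias := List.sizeOf_lt_of_mem d.2
    have h2 : sizeOf d.1.2 < sizeOf d.1 := by
      obtain ⟨⟨d1, d2⟩, hd⟩ := d; simp only [Prod.mk.sizeOf_spec]; omega
    simp only [USNF.node.sizeOf_spec]
    omega
  · have h1 : sizeOf u.1 < sizeOf boxes := mem_collect_sizeOf u.2
    simp only [USNF.node.sizeOf_spec]
    omega


section Aux

variable {Act : Type} {isL : Act → Bool}

theorem sat_listAnd {p : Proc Act} {l : List (Formula Act isL)} :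
    Sat isL p (listAnd isL l) ↔ ∀ φ ∈ l, Sat isL p φ := by
  induction l with
  | nil => simp [listAnd, Sat]
  | cons φ l ih => simp [listAnd, Sat, ih]

theorem sat_listOr {p : Proc Act} {l : List (Formula Act isL)} :
    Sat isL p (listOr isL l) ↔ ∃ φ ∈ l, Sat isL p φ := by
  induction l with
  | nil => simp [listOr, Sat]
  | cons φ l ih => simp [listOr, Sat, ih]

theorem step_plusList {l : List (Proc Act)} {a : Act} {p' : Proc Act} :
    Step isL (plusList l) a p' ↔ ∃ p ∈ l, Step isL p a p' := by
  induction l with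
  | nil =>
      simp only [plusList]
      constructor
      · intro h; cases h
      · rintro ⟨p, hp, _⟩; simp at hp
  | cons p l ih =>
      simp only [plusList]
      constructor
      · intro h
        cases h with
        | plusL h => exact ⟨p, by simp, h⟩
        | plusR h =>
            obtain ⟨q, hq, hs⟩ := ih.mp h
            exact ⟨q, by simp [hq], hs⟩
      · rintro ⟨q, hq, hs⟩
        rcases List.mem_cons.mp hq with rfl | hq
        · exact Step.plusL hs
        · exact Step.plusR (ih.mpr ⟨q, hq, hs⟩)

theorem step_act {a c : Act} {p p' : Proc Act} :
    Step isL (Proc.act a p) c p' ↔ c = a ∧ p' = p := by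
  constructor
  · intro h; cases h; exact ⟨rfl, rfl⟩
  · rintro ⟨rfl, rfl⟩; exact Step.act

theorem sat_mono {φ : Formula Act isL} :
    ∀ {p q : Proc Act}, ccle isL p q → Sat isL p φ → Sat isL q φ := by
  induction φ with
  | bot => intro p q _ h; exact h.elim
  | top => intro p q _ _; trivial
  | and φ ψ ih1 ih2 =>
      rintro p q h ⟨h1, h2⟩
      exact ⟨ih1 h h1, ih2 h h2⟩
  | or φ ψ ih1 ih2 =>
      rintro p q h (h1 | h2)
      · exact Or.inl (ih1 h h1)
      · exact Or.inr (ih2 h h2)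
  | box b φ ih =>
      rintro p q ⟨R, hR, hpq⟩ h q' hq'
      obtain ⟨p', hp', hR'⟩ := ((hR p q hpq).2 b.1 b.2 q' hq')
      exact ih ⟨R, hR, hR'⟩ (h p' hp')
  | dia a φ ih =>
      rintro p q ⟨R, hR, hpq⟩ ⟨p', hp', hφ⟩
      obtain ⟨q', hq', hR'⟩ := ((hR p q hpq).1 a.1 a.2 p' hp')
      exact ⟨q', hq', ih ⟨R, hR, hR'⟩ hφ⟩

end Aux

section Aux2

variable {Act : Type} [Fintype Act] [DecidableEq Act] {isL : Act → Bool}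

theorem theta_node (dias : List ({x : Act // isL x = false} × USNF Act isL))
    (boxes : List ({x : Act // isL x = true} × List (USNF Act isL))) :
    USNF.theta (.node dias boxes) =
      Proc.plus
        (plusList (dias.attach.map (fun d => Proc.act d.1.1.1 (USNF.theta d.1.2))))
        (plusList ((Finset.univ : Finset {x : Act // isL x = true}).toList.map (fun b =>
          plusList ((collect boxes b).attach.map (fun u =>
            Proc.act b.1 (USNF.theta u.1)))))) := by
  rw [USNF.theta]

theorem toFormula_node (dias : List ({x : Act // isL x = false} × USNF Act isL))
    (boxes : List ({x : Act // isL x = true} × List (USNF Act isL))) :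
    USNF.toFormula (.node dias boxes) =
      Formula.and
        (listAnd isL (dias.attach.map (fun d =>
          Formula.dia d.1.1 (USNF.toFormula d.1.2))))
        (listAnd isL ((Finset.univ : Finset {x : Act // isL x = true}).toList.map (fun b =>
          Formula.box b (listOr isL ((collect boxes b).attach.map (fun u =>
            USNF.toFormula u.1)))))) := by
  rw [USNF.toFormula]

theorem step_theta_node {dias : List ({x : Act // isL x = false} × USNF Act isL)}
    {boxes : List ({x : Act // isL x = true} × List (USNF Act isL))}
    {c : Act} {p' : Proc Act} :
    Step isL (USNF.theta (.node dias boxes)) c p' ↔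
      (∃ d ∈ dias, d.1.1 = c ∧ p' = USNF.theta d.2) ∨
      (∃ b : {x : Act // isL x = true}, b.1 = c ∧
        ∃ ψ ∈ collect boxes b, p' = USNF.theta ψ) := by
  rw [theta_node]
  constructor
  · intro h
    cases h with
    | plusL h =>
        left
        rw [step_plusList] at h
        obtain ⟨r, hr, hs⟩ := h
        simp only [List.mem_map, List.mem_attach, true_and] at hr
        obtain ⟨⟨d, hd⟩, rfl⟩ := hr
        rw [step_act] at hs
        exact ⟨d, hd, hs.1.symm, hs.2⟩
    | plusR h =>
        right
        rw [step_plusList] at h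
        obtain ⟨r, hr, hs⟩ := h
        simp only [List.mem_map] at hr
        obtain ⟨b, _, rfl⟩ := hr
        rw [step_plusList] at hs
        obtain ⟨r, hr, hs⟩ := hs
        simp only [List.mem_map, List.mem_attach, true_and] at hr
        obtain ⟨⟨ψ, hψ⟩, rfl⟩ := hr
        rw [step_act] at hs
        exact ⟨b, hs.1.symm, ψ, hψ, hs.2⟩
  · rintro (⟨d, hd, rfl, rfl⟩ | ⟨b, rfl, ψ, hψ, rfl⟩)
    · refine Step.plusL (step_plusList.mpr ⟨_, List.mem_map.mpr ⟨⟨d, hd⟩, List.mem_attach _ _, rfl⟩, Step.act⟩)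
    · refine Step.plusR (step_plusList.mpr ⟨_, List.mem_map.mpr ⟨b, Finset.mem_toList.mpr (Finset.mem_univ b), rfl⟩, ?_⟩)
      exact step_plusList.mpr ⟨_, List.mem_map.mpr ⟨⟨ψ, hψ⟩, List.mem_attach _ _, rfl⟩, Step.act⟩

theorem sat_theta (u : USNF Act isL) : Sat isL u.theta u.toFormula := by
  generalize hn : sizeOf u = n
  induction n using Nat.strong_induction_on generalizing u with
  | _ n IH =>
  subst hn
  cases u with
  | top =>
      rw [USNF.theta, USNF.toFormula]
      trivial
  | node dias boxes =>
      have IH1 : ∀ d ∈ dias, Sat isL (USNF.theta d.2) (USNF.toFormula d.2) := by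
        intro d hd
        refine IH _ ?_ d.2 rfl
        have h1 : sizeOf d < sizeOf dias := List.sizeOf_lt_of_mem hd
        have h2 : sizeOf d.2 < sizeOf d := by
          obtain ⟨d1, d2⟩ := d; simp only [Prod.mk.sizeOf_spec]; omega
        simp only [USNF.node.sizeOf_spec]
        omega
      have IH2 : ∀ (b : {x : Act // isL x = true}) (ψ : USNF Act isL),
          ψ ∈ collect boxes b → Sat isL ψ.theta ψ.toFormula := by
        intro b ψ hψ
        refine IH _ ?_ ψ rfl
        have h1 : sizeOf ψ < sizeOf boxes := mem_collect_sizeOf hψ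
        simp only [USNF.node.sizeOf_spec]
        omega
      rw [toFormula_node]
      refine ⟨?_, ?_⟩
      · rw [sat_listAnd]
        intro φ hφ
        simp only [List.mem_map, List.mem_attach, true_and] at hφ
        obtain ⟨⟨d, hd⟩, rfl⟩ := hφ
        exact ⟨USNF.theta d.2, step_theta_node.mpr (Or.inl ⟨d, hd, rfl, rfl⟩), IH1 d hd⟩
      · rw [sat_listAnd]
        intro φ hφ
        simp only [List.mem_map] at hφ
        obtain ⟨b, _, rfl⟩ := hφ
        intro p' hp'
        rcases step_theta_node.mp hp' with ⟨d, hd, hac, rfl⟩ | ⟨b', hb', ψ, hψ, rfl⟩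
        · exact absurd (hac ▸ d.1.2) (by simp [b.2])
        · rw [Subtype.ext hb'] at hψ
          rw [sat_listOr]
          exact ⟨_, List.mem_map.mpr ⟨⟨ψ, hψ⟩, List.mem_attach _ _, rfl⟩, IH2 b ψ hψ⟩

theorem main_sim :
    IsCCSim isL (Step isL) (fun p q => ∃ u : USNF Act isL,
      p = u.theta ∧ Sat isL q u.toFormula) := by
  rintro p q ⟨u, rfl, hq⟩
  constructor
  · intro a ha p' hp'
    cases u with
    | top =>
        rw [USNF.theta] at hp'
        cases hp' with
        | omega hb => rw [hb] at ha; cases ha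
    | node dias boxes =>
        rcases step_theta_node.mp hp' with ⟨d, hd, hac, rfl⟩ | ⟨b, hb, ψ, hψ, rfl⟩
        · rw [toFormula_node] at hq
          have h1 := sat_listAnd.mp hq.1 _
            (List.mem_map.mpr ⟨⟨d, hd⟩, List.mem_attach _ _, rfl⟩)
          obtain ⟨q', hq', hsat⟩ := h1
          exact ⟨q', hac ▸ hq', d.2, rfl, hsat⟩
        · rw [← hb, b.2] at ha; cases ha
  · intro b hb q' hq'
    cases u with
    | top =>
        refine ⟨Proc.omega, ?_, USNF.top, ?_, by rw [USNF.toFormula]; trivial⟩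
        · rw [USNF.theta]; exact Step.omega hb
        · rw [USNF.theta]
    | node dias boxes =>
        rw [toFormula_node] at hq
        have h2 := sat_listAnd.mp hq.2 _
          (List.mem_map.mpr ⟨⟨b, hb⟩, Finset.mem_toList.mpr (Finset.mem_univ _), rfl⟩)
        have h3 := h2 q' hq'
        rw [sat_listOr] at h3
        obtain ⟨φ, hφ, hsat⟩ := h3
        simp only [List.mem_map, List.mem_attach, true_and] at hφ
        obtain ⟨⟨ψ, hψ⟩, rfl⟩ := hφ
        exact ⟨USNF.theta ψ, step_theta_node.mpr (Or.inr ⟨⟨b, hb⟩, rfl, ψ, hψ, rfl⟩),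
          ψ, rfl, hsat⟩

end Aux2

/-- Every unary strong normal form
`φ = ⋀_{j∈J} ⟨a_j⟩φ_j ∧ ⋀_{b∈A^l} [b](⋁_{k∈K_b} ψ^k_b)` is represented by the
process term `θ(φ)`; in particular, `φ` is a characteristic formula for
`θ(φ)`. -/
theorem usnf_represented_by_theta {Act : Type} [Fintype Act] [DecidableEq Act]
    (isL : Act → Bool) (u : USNF Act isL) :
    Represents isL u.theta u.toFormula ∧ CharFor isL u.toFormula u.theta := by
  have hrep : Represents isL u.theta u.toFormula := by
    intro q
    constructor
    · intro h
      exact ⟨_, main_sim, u, rfl, h⟩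
    · intro h
      exact sat_mono h (sat_theta u)
  exact ⟨hrep, sat_theta u, fun q hq => (hrep q).mp hq⟩
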